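/- For every n ≥ 1, the map assigning to each Eulerian cycle σ of the de Bruijn graph H_n the sequence s : ZMod (2^n) → Bool defined by s(i) = (σ^i(0ⁿ))(0), where 0ⁿ denotes the all-false word in (Fin n → Bool), is a bijection from Θ(H_n) onto B₀(n), the set of de Bruijn sequences of order n starting with n zeros. -/

import Mathlib

/-- Source of an edge of the de Bruijn graph `H_n`: the first `n-1` bits of
the word `w` of length `n`. -/
def bSrc (n : ℕ) (w : Fin n → Bool) : Fin (n - 1) → Bool :=
  fun j => w (Fin.castLE (Nat.sub_le n 1) j)

/-- Target of an edge of the de Bruijn graph `H_n`: the last `n-1` bits of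
the word `w` of length `n`. -/
def bTgt (n : ℕ) (w : Fin n → Bool) : Fin (n - 1) → Bool :=
  fun j => w ⟨j.1 + 1, by have := j.isLt; omega⟩

/-- `s : ZMod (2^n) → Bool` is a de Bruijn sequence of order `n`: the window map
sending `i` to the length-`n` word starting at position `i` is injective. -/
def IsDeBruijn (n : ℕ) (s : ZMod (2 ^ n) → Bool) : Prop :=
  Function.Injective (fun i : ZMod (2 ^ n) => fun j : Fin n => s (i + (j : ℕ)))

/-- `s` starts with `n` zeros: `s i = false` for all `0 ≤ i ≤ n - 1`. -/
def StartsWithZeros (n : ℕ) (s : ZMod (2 ^ n) → Bool) : Prop :=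
  ∀ i : ℕ, i < n → s (i : ZMod (2 ^ n)) = false

/-!
An Eulerian cycle `σ` of `H_n` is a single cycle of length `2^n` on the words of length `n`,
and following an edge shifts a word one place to the left, so `σ^j w` begins with the `j`-th
bit of `w`.  Hence the length-`n` window at position `i` of the sequence `i ↦ (σ^i 0ⁿ) 0` is
`σ^i 0ⁿ` itself: the windows run through every word exactly once, starting with `0ⁿ`, and they
determine `σ`.  Conversely, the windows of a de Bruijn sequence form a bijection
`e : ZMod (2^n) ≃ (Fin n → Bool)`, and `e ∘ (· + 1) ∘ e⁻¹` is an Eulerian cycle with that sequence.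
-/

open Equiv Finset

theorem pow_natCast_val_of_orderOf_eq {G : Type*} [Monoid G] {g : G} {N : ℕ}
    (hg : orderOf g = N) (k : ℕ) : g ^ (k : ZMod N).val = g ^ k := by
  rw [ZMod.val_natCast, ← hg, pow_mod_orderOf]

namespace Equiv.Perm

variable {α : Type*}

theorem IsCycle.orderOf_eq_card_of_support_eq_univ [Fintype α] [DecidableEq α] {σ : Perm α}
    (hσ : σ.IsCycle) (hs : σ.support = univ) : orderOf σ = Fintype.card α := by
  rw [hσ.orderOf, hs, card_univ]

theorem IsCycle.injective_pow_val_apply [Finite α] {σ : Perm α} {x : α} {N : ℕ} [NeZero N]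
    (hσ : σ.IsCycle) (hx : σ x ≠ x) (hN : orderOf σ = N) :
    Function.Injective fun i : ZMod N => (σ ^ i.val) x := by
  intro i j hij
  have hpow : σ ^ i.val = σ ^ j.val := hσ.pow_eq_pow_iff.mpr ⟨x, hx, hij⟩
  rw [pow_eq_pow_iff_modEq, hN] at hpow
  rw [← ZMod.natCast_zmod_val i, ← ZMod.natCast_zmod_val j]
  exact (ZMod.natCast_eq_natCast_iff _ _ _).mpr hpow

theorem ext_of_pow_apply_eq {σ τ : Perm α} {x : α} (hx : ∀ y, ∃ k : ℕ, (σ ^ k) x = y)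
    (h : ∀ k : ℕ, (σ ^ k) x = (τ ^ k) x) : σ = τ := by
  ext y
  obtain ⟨k, rfl⟩ := hx y
  calc σ ((σ ^ k) x) = (σ ^ (k + 1)) x := by rw [pow_succ', mul_apply]
    _ = (τ ^ (k + 1)) x := h (k + 1)
    _ = τ ((σ ^ k) x) := by rw [pow_succ', mul_apply, h k]

section ZModRotation

variable {N : ℕ} (e : ZMod N ≃ α)

theorem permCongr_addRight_one_pow_apply (k : ℕ) (i : ZMod N) :
    (e.permCongr (Equiv.addRight 1) ^ k) (e i) = e (i + k) := by
  induction k with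
  | zero => simp
  | succ k ih =>
    rw [pow_succ', mul_apply, ih, permCongr_apply, symm_apply_apply, coe_addRight]
    push_cast
    ring_nf

variable [Fact (1 < N)]

theorem permCongr_addRight_one_apply_ne (y : α) : e.permCongr (Equiv.addRight 1) y ≠ y := by
  obtain ⟨i, rfl⟩ := e.surjective y
  simp

theorem isCycle_permCongr_addRight_one : (e.permCongr (Equiv.addRight 1)).IsCycle := by
  refine ⟨e 0, permCongr_addRight_one_apply_ne e _, fun y _ => ⟨(e.symm y).val, ?_⟩⟩
  rw [zpow_natCast, permCongr_addRight_one_pow_apply]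
  simp

theorem support_permCongr_addRight_one [Fintype α] [DecidableEq α] :
    (e.permCongr (Equiv.addRight 1)).support = univ :=
  eq_univ_of_forall fun y => mem_support.mpr (permCongr_addRight_one_apply_ne e y)

end ZModRotation

end Equiv.Perm

def window {N : ℕ} (n : ℕ) (s : ZMod N → Bool) (i : ZMod N) : Fin n → Bool :=
  fun j => s (i + (j : ℕ))

theorem IsDeBruijn.bijective_window {n : ℕ} {s : ZMod (2 ^ n) → Bool} (hs : IsDeBruijn n s) :
    Function.Bijective (window n s) :=
  (Fintype.bijective_iff_injective_and_card _).mpr ⟨hs, by simp⟩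

theorem startsWithZeros_iff_window_zero (n : ℕ) (s : ZMod (2 ^ n) → Bool) :
    StartsWithZeros n s ↔ window n s 0 = fun _ => false := by
  simp only [StartsWithZeros, window, zero_add, funext_iff, Fin.forall_iff]

theorem bSrc_window_add_one {N : ℕ} (n : ℕ) (s : ZMod N → Bool) (i : ZMod N) :
    bSrc n (window n s (i + 1)) = bTgt n (window n s i) := by
  funext j
  simp only [bSrc, bTgt, window, Fin.val_castLE]
  push_cast
  ring_nf

def IsEulerianCycle (n : ℕ) (σ : Perm (Fin n → Bool)) : Prop :=
  (∀ w, bSrc n (σ w) = bTgt n w) ∧ σ.IsCycle ∧ σ.support = univ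

def orbitSeq {n : ℕ} (hn : 1 ≤ n) (σ : Perm (Fin n → Bool)) (x : Fin n → Bool) :
    ZMod (2 ^ n) → Bool :=
  fun i => (σ ^ i.val) x ⟨0, hn⟩

theorem pow_apply_of_bSrc_eq_bTgt {n : ℕ} {σ : Perm (Fin n → Bool)}
    (hσ : ∀ w, bSrc n (σ w) = bTgt n w) (k : ℕ) (w : Fin n → Bool) (m : ℕ) (h : m + k < n) :
    (σ ^ k) w ⟨m, by omega⟩ = w ⟨m + k, h⟩ := by
  induction k generalizing w with
  | zero => rfl
  | succ k ih =>
    rw [pow_succ, Perm.mul_apply, ih (σ w) (by omega)]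
    exact congrFun (hσ w) ⟨m + k, by omega⟩

namespace IsEulerianCycle

variable {n : ℕ} {σ τ : Perm (Fin n → Bool)}

theorem apply_ne (hσ : IsEulerianCycle n σ) (y : Fin n → Bool) : σ y ≠ y :=
  Perm.mem_support.mp (hσ.2.2 ▸ mem_univ y)

theorem orderOf_eq (hσ : IsEulerianCycle n σ) : orderOf σ = 2 ^ n := by
  rw [hσ.2.1.orderOf_eq_card_of_support_eq_univ hσ.2.2]
  simp

theorem window_orbitSeq (hσ : IsEulerianCycle n σ) (hn : 1 ≤ n) (x : Fin n → Bool)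
    (i : ZMod (2 ^ n)) : window n (orbitSeq hn σ x) i = (σ ^ i.val) x := by
  funext j
  have : NeZero (2 ^ n) := ⟨by positivity⟩
  have hij : i + (j : ℕ) = ((j + i.val : ℕ) : ZMod (2 ^ n)) := by
    rw [Nat.cast_add, ZMod.natCast_zmod_val, add_comm]
  simp only [window, orbitSeq, hij, pow_natCast_val_of_orderOf_eq hσ.orderOf_eq, pow_add,
    Perm.mul_apply]
  simpa using pow_apply_of_bSrc_eq_bTgt hσ.1 j ((σ ^ i.val) x) 0 (by omega)

theorem isDeBruijn_orbitSeq (hσ : IsEulerianCycle n σ) (hn : 1 ≤ n) (x : Fin n → Bool) :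
    IsDeBruijn n (orbitSeq hn σ x) := by
  have : NeZero (2 ^ n) := ⟨by positivity⟩
  show Function.Injective (window n (orbitSeq hn σ x))
  rw [funext (hσ.window_orbitSeq hn x)]
  exact hσ.2.1.injective_pow_val_apply (hσ.apply_ne x) hσ.orderOf_eq

theorem window_orbitSeq_zero (hσ : IsEulerianCycle n σ) (hn : 1 ≤ n) (x : Fin n → Bool) :
    window n (orbitSeq hn σ x) 0 = x := by
  rw [hσ.window_orbitSeq, ZMod.val_zero, pow_zero, Perm.one_apply]

theorem eq_of_orbitSeq_eq (hσ : IsEulerianCycle n σ) (hτ : IsEulerianCycle n τ) (hn : 1 ≤ n)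
    {x : Fin n → Bool} (h : orbitSeq hn σ x = orbitSeq hn τ x) : σ = τ := by
  refine Perm.ext_of_pow_apply_eq (fun y => hσ.2.1.exists_pow_eq (hσ.apply_ne x) (hσ.apply_ne y))
    fun k => ?_
  have hk := congrArg (window n · (k : ZMod (2 ^ n))) h
  simpa only [hσ.window_orbitSeq, hτ.window_orbitSeq, pow_natCast_val_of_orderOf_eq hσ.orderOf_eq,
    pow_natCast_val_of_orderOf_eq hτ.orderOf_eq] using hk

end IsEulerianCycle

theorem IsDeBruijn.exists_isEulerianCycle_orbitSeq_eq {n : ℕ} (hn : 1 ≤ n)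
    {s : ZMod (2 ^ n) → Bool} (hs : IsDeBruijn n s) :
    ∃ σ, IsEulerianCycle n σ ∧ orbitSeq hn σ (window n s 0) = s := by
  have : Fact (1 < 2 ^ n) := ⟨Nat.one_lt_two_pow (by omega)⟩
  let e := Equiv.ofBijective (window n s) hs.bijective_window
  refine ⟨e.permCongr (Equiv.addRight 1), ⟨fun w => ?_, Perm.isCycle_permCongr_addRight_one e,
    Perm.support_permCongr_addRight_one e⟩, ?_⟩
  · obtain ⟨i, rfl⟩ := e.surjective w
    simpa [e] using bSrc_window_add_one n s i
  · funext i
    simpa [e, window, orbitSeq] using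
      congrFun (Perm.permCongr_addRight_one_pow_apply e i.val 0) ⟨0, hn⟩

/-- For `n ≥ 1`, sending an Eulerian cycle `σ` of `H_n` to the sequence
`s i = (σ^i 0ⁿ) 0` is a bijection from `Θ(H_n)` onto `B₀(n)`. -/
theorem euler_deBruijn_graph_bijOn (n : ℕ) (hn : 1 ≤ n) :
    Set.BijOn
      (fun σ : Equiv.Perm (Fin n → Bool) =>
        fun i : ZMod (2 ^ n) => (σ ^ i.val) (fun _ => false) ⟨0, hn⟩)
      {σ | (∀ w, bSrc n (σ w) = bTgt n w) ∧ σ.IsCycle ∧ σ.support = Finset.univ}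
      {s | IsDeBruijn n s ∧ StartsWithZeros n s} := by
  refine ⟨fun σ hσ => ?_, fun σ hσ τ hτ h => IsEulerianCycle.eq_of_orbitSeq_eq hσ hτ hn h, ?_⟩
  · refine ⟨IsEulerianCycle.isDeBruijn_orbitSeq hσ hn _, ?_⟩
    exact (startsWithZeros_iff_window_zero n _).mpr (IsEulerianCycle.window_orbitSeq_zero hσ hn _)
  · rintro s ⟨hs, hzero⟩
    obtain ⟨σ, hσ, hσs⟩ := hs.exists_isEulerianCycle_orbitSeq_eq hn
    rw [(startsWithZeros_iff_window_zero n s).mp hzero] at hσs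
    exact ⟨σ, hσ, hσs⟩
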